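/- For any periodic sequences S, Q ⊆ ℝ, Elm(S,Q) = 0 if and only if there exist t ∈ ℝ and ε ∈ {1, −1} with Q = {ε·x + t : x ∈ S}, i.e. the unoriented elastic metric satisfies the first metric axiom on isometry classes of periodic sequences. -/

import Mathlib

/-- A periodic sequence in `ℝ` with an `m`-point motif `p` and period `l`:
the set `{p i + l * j : i ∈ Fin m, j ∈ ℤ}` where `0 ≤ p 0 < p 1 < ⋯ < p (m-1) < l`. -/
structure PSeq (m : ℕ) where
  m_pos : 0 < m
  l : ℝ
  l_pos : 0 < l
  p : Fin m → ℝ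
  p_strict : StrictMono p
  p0_nonneg : 0 ≤ p ⟨0, m_pos⟩
  p_lt : ∀ i, p i < l

namespace PSeq

variable {m : ℕ}

/-- The set of points of the periodic sequence. -/
def pts (S : PSeq m) : Set ℝ := {x | ∃ (i : Fin m) (j : ℤ), x = S.p i + S.l * j}

/-- The period is minimal: the same set of points cannot be produced with a smaller period. -/
def IsMinimal (S : PSeq m) : Prop := ∀ (m' : ℕ) (T : PSeq m'), T.pts = S.pts → S.l ≤ T.l

/-- The distance list `D` of the periodic sequence, indexed by `ZMod m`:
`D i = p (i+1) - p i` for `i < m - 1`, and `D (m-1) = (p 0 + l) - p (m-1)`. -/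
noncomputable def D (S : PSeq m) : ZMod m → ℝ := fun i =>
  letI : NeZero m := ⟨S.m_pos.ne'⟩
  if h : i.val + 1 < m then S.p ⟨i.val + 1, h⟩ - S.p ⟨i.val, i.val_lt⟩
  else S.p ⟨0, S.m_pos⟩ + S.l - S.p ⟨i.val, i.val_lt⟩

end PSeq

/-- The cyclic shift `σ_s` acting on vectors indexed by `ZMod n`: `(σ_s v) i = v (i + s)`. -/
def shiftVec {n : ℕ} (s : ZMod n) (v : ZMod n → ℝ) : ZMod n → ℝ := fun i => v (i + s)

/-- The reversal `ρ`: `(ρ v) i = v (m - 1 - i)` (note `m - 1 = -1` in `ZMod m`). -/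
def revVec {n : ℕ} (v : ZMod n → ℝ) : ZMod n → ℝ := fun i => v (-1 - i)

/-- The Minkowski sup-norm `‖v‖_∞ = max_i |v i|` of a vector indexed by `ZMod n`, `n > 0`. -/
noncomputable def supNorm {n : ℕ} (hn : 0 < n) (v : ZMod n → ℝ) : ℝ :=
  letI : NeZero n := ⟨hn.ne'⟩
  Finset.univ.sup' (Finset.univ_nonempty_iff.mpr ⟨0⟩) fun i => |v i|

namespace PSeq

/-- The distance list of the multiple `(n / m) S` of a periodic sequence `S` with `m ∣ n`,
i.e. the `(n/m)`-fold concatenation of `D S`, indexed by `ZMod n`. -/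
noncomputable def Dc {m : ℕ} (S : PSeq m) (n : ℕ) : ZMod n → ℝ :=
  fun i => S.D ((i.val : ZMod m))

/-- The oriented elastic metric `Elm^o(S,Q)`: with `n = lcm(m₁, m₂)`, the minimum over all
cyclic shifts `s ∈ ZMod n` of `‖D((n/m₁)S) - σ_s(D((n/m₂)Q))‖_∞`. -/
noncomputable def Elmo {m₁ m₂ : ℕ} (S : PSeq m₁) (Q : PSeq m₂) : ℝ :=
  letI : NeZero (Nat.lcm m₁ m₂) := ⟨(Nat.lcm_pos S.m_pos Q.m_pos).ne'⟩
  Finset.univ.inf' (Finset.univ_nonempty_iff.mpr ⟨0⟩)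
    fun s : ZMod (Nat.lcm m₁ m₂) =>
      supNorm (Nat.lcm_pos S.m_pos Q.m_pos)
        fun i => S.Dc (Nat.lcm m₁ m₂) i - shiftVec s (Q.Dc (Nat.lcm m₁ m₂)) i

/-- The unoriented elastic metric `Elm(S,Q)`: the minimum over all `2n` permutations
`σ_s` and `σ_s ∘ ρ` of `‖D((n/m₁)S) - σ(D((n/m₂)Q))‖_∞`, where `n = lcm(m₁, m₂)`. -/
noncomputable def Elm {m₁ m₂ : ℕ} (S : PSeq m₁) (Q : PSeq m₂) : ℝ :=
  letI : NeZero (Nat.lcm m₁ m₂) := ⟨(Nat.lcm_pos S.m_pos Q.m_pos).ne'⟩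
  min
    (Finset.univ.inf' (Finset.univ_nonempty_iff.mpr ⟨0⟩)
      fun s : ZMod (Nat.lcm m₁ m₂) =>
        supNorm (Nat.lcm_pos S.m_pos Q.m_pos)
          fun i => S.Dc (Nat.lcm m₁ m₂) i - shiftVec s (Q.Dc (Nat.lcm m₁ m₂)) i)
    (Finset.univ.inf' (Finset.univ_nonempty_iff.mpr ⟨0⟩)
      fun s : ZMod (Nat.lcm m₁ m₂) =>
        supNorm (Nat.lcm_pos S.m_pos Q.m_pos)
          fun i => S.Dc (Nat.lcm m₁ m₂) i - shiftVec s (revVec (Q.Dc (Nat.lcm m₁ m₂))) i)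

end PSeq

/-! Listing the points of `S` in increasing order gives a strictly increasing sequence `ℤ → ℝ`
whose forward differences are the distance list of `S` read periodically. Two strictly
increasing sequences `ℤ → ℝ` have the same range exactly when one is an index shift of the
other, since an order automorphism of `ℤ` is a translation; hence their ranges differ by a
translation exactly when their difference sequences agree up to an index shift, and a
reflection `x ↦ t - x` reverses the difference sequence. On the other side, `Elm S Q = 0`
says that the distance lists of the common multiple agree up to a cyclic shift, possibly
after reversal, which is the same condition on the periodic difference sequences. -/

open Set
open scoped fwdDiff

theorem min_eq_iff_of_le {α : Type*} [LinearOrder α] {a b c : α} (ha : c ≤ a) (hb : c ≤ b) :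
    min a b = c ↔ a = c ∨ b = c := by
  rcases le_total a b with hab | hab
  · rw [min_eq_left hab]
    exact ⟨Or.inl, fun h => h.elim id fun hbc => le_antisymm (hab.trans hbc.le) ha⟩
  · rw [min_eq_right hab]
    exact ⟨Or.inr, fun h => h.elim (fun hac => le_antisymm (hab.trans hac.le) hb) id⟩

theorem Finset.inf'_eq_iff_of_le {ι α : Type*} [LinearOrder α] {s : Finset ι} (hs : s.Nonempty)
    {f : ι → α} {b : α} (hb : ∀ i ∈ s, b ≤ f i) : s.inf' hs f = b ↔ ∃ i ∈ s, f i = b := by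
  constructor
  · rintro rfl
    obtain ⟨i, hi, h⟩ := Finset.exists_mem_eq_inf' hs f
    exact ⟨i, hi, h.symm⟩
  · rintro ⟨i, hi, rfl⟩
    exact le_antisymm (Finset.inf'_le f hi) (Finset.le_inf' hs f hb)

theorem Int.fwdDiff_eq_fwdDiff_iff {G : Type*} [AddCommGroup G] {f g : ℤ → G} :
    Δ_[1] f = Δ_[1] g ↔ ∃ t, ∀ k, f k = g k + t := by
  constructor
  · intro h
    have hper : Function.Periodic (fun k => f k - g k) 1 := fun k =>
      sub_eq_sub_iff_sub_eq_sub.mp (congrFun h k)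
    refine ⟨f 0 - g 0, fun k => ?_⟩
    have hk := hper.int_mul_eq k
    rw [mul_one] at hk
    exact sub_eq_iff_eq_add'.mp hk
  · rintro ⟨t, h⟩
    funext k
    simp only [fwdDiff, h]
    abel

theorem OrderIso.int_apply_eq_add (e : ℤ ≃o ℤ) (k : ℤ) : e k = k + e 0 := by
  have hsucc : Δ_[1] e = Δ_[1] id := funext fun k => by
    rw [fwdDiff, fwdDiff, ← Order.succ_eq_add_one, e.map_succ, Order.succ_eq_add_one]
    simp
  obtain ⟨t, ht⟩ := Int.fwdDiff_eq_fwdDiff_iff.mp hsucc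
  rw [ht k, ht 0, id, id, zero_add]

theorem StrictMono.range_eq_range_iff {α : Type*} [LinearOrder α] {f g : ℤ → α}
    (hf : StrictMono f) (hg : StrictMono g) :
    range f = range g ↔ ∃ a, ∀ k, f k = g (k + a) := by
  constructor
  · intro h
    let e : ℤ ≃o ℤ :=
      (hf.orderIso f).trans ((OrderIso.setCongr _ _ h).trans (hg.orderIso g).symm)
    refine ⟨e 0, fun k => ?_⟩
    rw [← e.int_apply_eq_add]
    exact congrArg Subtype.val ((hg.orderIso g).apply_symm_apply ⟨f k, h ▸ mem_range_self k⟩).symm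
  · rintro ⟨a, h⟩
    rw [funext h]
    exact (add_right_surjective a).range_comp g

theorem StrictMono.exists_range_eq_range_add_iff {α : Type*} [AddCommGroup α] [LinearOrder α]
    [IsOrderedAddMonoid α] {f g : ℤ → α} (hf : StrictMono f) (hg : StrictMono g) :
    (∃ t, range f = range (fun k => g k + t)) ↔ ∃ a, ∀ k, Δ_[1] f k = Δ_[1] g (k + a) := by
  simp only [hf.range_eq_range_iff (hg.add_const _)]
  rw [exists_comm]
  refine exists_congr fun a => ?_
  simp only [← fwdDiff_comp_add, ← funext_iff, Int.fwdDiff_eq_fwdDiff_iff]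

theorem exists_isometry_image_eq_comm {A B : Set ℝ} :
    (∃ t ε : ℝ, (ε = 1 ∨ ε = -1) ∧ A = (fun x => ε * x + t) '' B) ↔
      ∃ t ε : ℝ, (ε = 1 ∨ ε = -1) ∧ B = (fun x => ε * x + t) '' A := by
  suffices key : ∀ A B : Set ℝ, (∃ t ε : ℝ, (ε = 1 ∨ ε = -1) ∧ A = (fun x => ε * x + t) '' B) →
      ∃ t ε : ℝ, (ε = 1 ∨ ε = -1) ∧ B = (fun x => ε * x + t) '' A from ⟨key A B, key B A⟩
  rintro A B ⟨t, ε, hε, rfl⟩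
  have hεε : ε * ε = 1 := by rcases hε with rfl | rfl <;> norm_num
  refine ⟨-(ε * t), ε, hε, ?_⟩
  rw [image_image]
  refine (image_id B).symm.trans (image_congr fun x _ => ?_)
  rw [id]
  linear_combination (-x) * hεε

theorem supNorm_nonneg {n : ℕ} (hn : 0 < n) (v : ZMod n → ℝ) : 0 ≤ supNorm hn v :=
  have : NeZero n := ⟨hn.ne'⟩
  (abs_nonneg (v 0)).trans (Finset.le_sup' (fun i => |v i|) (Finset.mem_univ 0))

theorem supNorm_eq_zero_iff {n : ℕ} (hn : 0 < n) (v : ZMod n → ℝ) : supNorm hn v = 0 ↔ v = 0 := by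
  have : NeZero n := ⟨hn.ne'⟩
  refine ⟨fun h => funext fun i => abs_nonpos_iff.mp ?_, fun h => ?_⟩
  · exact h ▸ Finset.le_sup' (fun i => |v i|) (Finset.mem_univ i)
  · exact le_antisymm (Finset.sup'_le _ _ fun i _ => by simp [h]) (supNorm_nonneg hn v)

namespace PSeq

variable {m m' : ℕ} (S : PSeq m) (Q : PSeq m')

theorem D_pos (i : ZMod m) : 0 < S.D i := by
  have : NeZero m := ⟨S.m_pos.ne'⟩
  unfold D
  split_ifs with h
  · exact sub_pos.mpr (S.p_strict (Fin.mk_lt_mk.mpr (Nat.lt_succ_self _)))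
  · linarith [S.p_lt ⟨i.val, i.val_lt⟩, S.p0_nonneg]

noncomputable def enum (k : ℤ) : ℝ :=
  letI : NeZero m := ⟨S.m_pos.ne'⟩
  S.p ⟨(k : ZMod m).val, ZMod.val_lt _⟩ + S.l * (k / m : ℤ)

theorem enum_add_mul (i : Fin m) (j : ℤ) : S.enum (i + m * j) = S.p i + S.l * j := by
  have : NeZero m := ⟨S.m_pos.ne'⟩
  have hi : (((i : ℤ) + m * j : ℤ) : ZMod m).val = i := by
    simp [ZMod.val_natCast_of_lt i.is_lt]
  have hj : ((i : ℤ) + m * j) / m = j := by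
    rw [Int.add_mul_ediv_left _ _ (by exact_mod_cast S.m_pos.ne'),
      Int.ediv_eq_zero_of_lt (by positivity) (by exact_mod_cast i.is_lt), zero_add]
  simp only [enum, hi, hj]

theorem range_enum : range S.enum = S.pts := by
  ext x
  constructor
  · rintro ⟨k, rfl⟩
    exact ⟨_, k / m, rfl⟩
  · rintro ⟨i, j, rfl⟩
    exact ⟨i + m * j, S.enum_add_mul i j⟩

theorem fwdDiff_enum (k : ℤ) : Δ_[1] S.enum k = S.D k := by
  have : NeZero m := ⟨S.m_pos.ne'⟩
  have hk : k = (k : ZMod m).val + m * (k / m) := by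
    rw [ZMod.val_intCast]
    exact (Int.emod_add_mul_ediv k m).symm
  have hlt := ZMod.val_lt (k : ZMod m)
  rw [fwdDiff, D]
  split_ifs with h
  · rw [show k + 1 = ((⟨_, h⟩ : Fin m) : ℕ) + m * (k / m) by push_cast; omega, enum_add_mul, enum]
    ring
  · have hk' : k + 1 = ((⟨0, S.m_pos⟩ : Fin m) : ℕ) + m * (k / m + 1) := by
      push_cast
      rw [mul_add]
      omega
    rw [hk', enum_add_mul, enum]
    push_cast
    ring

theorem strictMono_enum : StrictMono S.enum :=
  strictMono_int_of_lt_succ fun k => sub_pos.mp (S.fwdDiff_enum k ▸ S.D_pos k : 0 < Δ_[1] S.enum k)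

theorem exists_pts_eq_image_add_iff :
    (∃ t, S.pts = (· + t) '' Q.pts) ↔ ∃ a : ℤ, ∀ k : ℤ, S.D k = Q.D ↑(k + a) := by
  simp only [← S.range_enum, ← Q.range_enum, ← range_comp, Function.comp_def,
    S.strictMono_enum.exists_range_eq_range_add_iff Q.strictMono_enum, fwdDiff_enum]

theorem exists_pts_eq_image_neg_add_iff :
    (∃ t, S.pts = (-· + t) '' Q.pts) ↔ ∃ a : ℤ, ∀ k : ℤ, S.D k = Q.D ↑(-1 - (k + a)) := by
  set R : ℤ → ℝ := fun k => -Q.enum (-k)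
  have hR : StrictMono R := fun a b h => neg_lt_neg (Q.strictMono_enum (neg_lt_neg h))
  have hrange : ∀ t, (-· + t) '' Q.pts = range (fun k => R k + t) := fun t => by
    rw [← Q.range_enum, ← range_comp, ← (neg_surjective (G := ℤ)).range_comp]
    rfl
  have hdiff : ∀ k, Δ_[1] R k = Q.D ↑(-1 - k) := fun k => by
    rw [← Q.fwdDiff_enum]
    simp only [R, fwdDiff]
    ring_nf
  simp only [hrange, ← S.range_enum, S.strictMono_enum.exists_range_eq_range_add_iff hR,
    fwdDiff_enum, hdiff]

theorem Dc_intCast {n : ℕ} [NeZero n] (hmn : m ∣ n) (k : ℤ) : S.Dc n k = S.D k := by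
  simp only [Dc, ZMod.natCast_val, ZMod.cast_intCast hmn]

theorem exists_Dc_eq_shiftVec_iff {n : ℕ} [NeZero n] (hS : m ∣ n) (hQ : m' ∣ n) :
    (∃ s : ZMod n, ∀ i, S.Dc n i = shiftVec s (Q.Dc n) i) ↔
      ∃ a : ℤ, ∀ k : ℤ, S.D k = Q.D ↑(k + a) := by
  simp only [ZMod.intCast_surjective.exists, ZMod.intCast_surjective.forall, shiftVec,
    ← Int.cast_add, S.Dc_intCast hS, Q.Dc_intCast hQ]

theorem exists_Dc_eq_shiftVec_revVec_iff {n : ℕ} [NeZero n] (hS : m ∣ n) (hQ : m' ∣ n) :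
    (∃ s : ZMod n, ∀ i, S.Dc n i = shiftVec s (revVec (Q.Dc n)) i) ↔
      ∃ a : ℤ, ∀ k : ℤ, S.D k = Q.D ↑(-1 - (k + a)) := by
  simp only [ZMod.intCast_surjective.exists, ZMod.intCast_surjective.forall, shiftVec, revVec,
    S.Dc_intCast hS, ← Q.Dc_intCast hQ]
  push_cast
  rfl

theorem Elm_eq_zero_iff :
    S.Elm Q = 0 ↔
      (∃ s, ∀ i, S.Dc (Nat.lcm m m') i = shiftVec s (Q.Dc (Nat.lcm m m')) i) ∨
      ∃ s, ∀ i, S.Dc (Nat.lcm m m') i = shiftVec s (revVec (Q.Dc (Nat.lcm m m'))) i := by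
  have hnonneg := supNorm_nonneg (Nat.lcm_pos S.m_pos Q.m_pos)
  rw [Elm, min_eq_iff_of_le (Finset.le_inf' _ _ fun _ _ => hnonneg _)
      (Finset.le_inf' _ _ fun _ _ => hnonneg _),
    Finset.inf'_eq_iff_of_le _ fun _ _ => hnonneg _,
    Finset.inf'_eq_iff_of_le _ fun _ _ => hnonneg _]
  simp only [Finset.mem_univ, true_and, supNorm_eq_zero_iff, funext_iff, Pi.zero_apply, sub_eq_zero]

end PSeq

/-- the unoriented elastic metric vanishes exactly on pairs of periodic
sequences related by an isometry of `ℝ` (first metric axiom on isometry classes). -/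
theorem Elm_eq_zero_iff_isometry {m₁ m₂ : ℕ} (S : PSeq m₁) (Q : PSeq m₂) :
    PSeq.Elm S Q = 0 ↔
      ∃ (t ε : ℝ), (ε = 1 ∨ ε = -1) ∧ Q.pts = (fun x => ε * x + t) '' S.pts := by
  have : NeZero (Nat.lcm m₁ m₂) := ⟨(Nat.lcm_pos S.m_pos Q.m_pos).ne'⟩
  have hS := Nat.dvd_lcm_left m₁ m₂
  have hQ := Nat.dvd_lcm_right m₁ m₂
  rw [exists_isometry_image_eq_comm, S.Elm_eq_zero_iff, S.exists_Dc_eq_shiftVec_iff Q hS hQ,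
    S.exists_Dc_eq_shiftVec_revVec_iff Q hS hQ, ← S.exists_pts_eq_image_add_iff,
    ← S.exists_pts_eq_image_neg_add_iff]
  simp only [or_and_right, exists_or, exists_eq_left, one_mul, neg_one_mul]
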